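/- arXiv:2301.10967 — 4 statements merged into one kernel-verified Lean document; each statement's English description precedes it below -/
import Mathlib

section
/- Let ℓ ≥ 2 be even, let λ₁,…,λ_ℓ ∈ ℂ be pairwise distinct, let c = diag(λ₁,…,λ_ℓ) on Q = ℂ^ℓ with the standard symmetric bilinear form (x,y) = Σᵢ xᵢyᵢ. Suppose x ∈ Q is nonzero and satisfies (x, cⁱx) = 0 for 0 ≤ i ≤ ℓ−2. Then (x, c^{ℓ−1}x) ≠ 0, the vectors x, cx, …, c^{ℓ/2−1}x are linearly independent, and their span L is a Lagrangian subspace of Q (i.e., L is isotropic of dimension ℓ/2). Moreover, the image of the composition L ⊆ Q → (c) → Q → Q/L has dimension exactly 1. -/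
open scoped BigOperators

/-- Pairing with a fixed vector `w`, as a linear map. -/
noncomputable def pairL (ℓ : ℕ) (w : Fin ℓ → ℂ) : (Fin ℓ → ℂ) →ₗ[ℂ] ℂ where
  toFun u := ∑ j, u j * w j
  map_add' u v := by simp [add_mul, Finset.sum_add_distrib]
  map_smul' t u := by simp [Finset.mul_sum, smul_eq_mul, mul_assoc]

@[simp] lemma pairL_apply (ℓ : ℕ) (w u : Fin ℓ → ℂ) :
    pairL ℓ w u = ∑ j, u j * w j := rfl

/-- The diagonal endomorphism `diag(λ₁, …, λ_ℓ)` of `ℂ^ℓ`. -/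
noncomputable def diagEnd (ℓ : ℕ) (lam : Fin ℓ → ℂ) : Module.End ℂ (Fin ℓ → ℂ) :=
  LinearMap.pi fun j => lam j • LinearMap.proj j

lemma diagEnd_pow_apply (ℓ : ℕ) (lam : Fin ℓ → ℂ) (x : Fin ℓ → ℂ) (n : ℕ) (j : Fin ℓ) :
    ((diagEnd ℓ lam ^ n) x) j = lam j ^ n * x j := by
  induction n with
  | zero => simp
  | succ n ih =>
    have step : ∀ y : Fin ℓ → ℂ, (diagEnd ℓ lam) y j = lam j * y j := fun y => by
      simp [diagEnd]
    rw [pow_succ', Module.End.mul_apply, step, ih, pow_succ]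
    ring

/-- Let `ℓ ≥ 2` be even, `λ₁,…,λ_ℓ ∈ ℂ` pairwise distinct, `c = diag(λ₁,…,λ_ℓ)`
on `Q = ℂ^ℓ` with the standard symmetric bilinear form. If `x ≠ 0` satisfies
`(x, cⁱx) = 0` for `0 ≤ i ≤ ℓ−2`, then `(x, c^{ℓ−1}x) ≠ 0`; the vectors
`x, cx, …, c^{ℓ/2−1}x` are linearly independent; their span `L` is Lagrangian
(isotropic of dimension `ℓ/2`); and the image of `L ⊆ Q → (c) → Q → Q/L` has
dimension exactly `1`. -/
theorem stmt2 (ℓ : ℕ) (hℓ : 2 ≤ ℓ) (hev : Even ℓ) (lam : Fin ℓ → ℂ)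
    (hdist : Function.Injective lam) (x : Fin ℓ → ℂ) (hx : x ≠ 0)
    (h : ∀ i : ℕ, i ≤ ℓ - 2 → ∑ j, x j * ((diagEnd ℓ lam ^ i) x) j = 0) :
    (∑ j, x j * ((diagEnd ℓ lam ^ (ℓ - 1)) x) j ≠ 0) ∧
    LinearIndependent ℂ (fun i : Fin (ℓ / 2) => (diagEnd ℓ lam ^ (i : ℕ)) x) ∧
    (∀ u ∈ Submodule.span ℂ (Set.range fun i : Fin (ℓ / 2) => (diagEnd ℓ lam ^ (i : ℕ)) x),
      ∀ v ∈ Submodule.span ℂ (Set.range fun i : Fin (ℓ / 2) => (diagEnd ℓ lam ^ (i : ℕ)) x),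
      ∑ j, u j * v j = 0) ∧
    Module.finrank ℂ
      (Submodule.span ℂ (Set.range fun i : Fin (ℓ / 2) => (diagEnd ℓ lam ^ (i : ℕ)) x)) = ℓ / 2 ∧
    Module.finrank ℂ (LinearMap.range
      ((Submodule.span ℂ (Set.range fun i : Fin (ℓ / 2) => (diagEnd ℓ lam ^ (i : ℕ)) x)).mkQ.comp
        ((diagEnd ℓ lam : (Fin ℓ → ℂ) →ₗ[ℂ] Fin ℓ → ℂ).domRestrict
          (Submodule.span ℂ (Set.range fun i : Fin (ℓ / 2) => (diagEnd ℓ lam ^ (i : ℕ)) x))))) = 1 := by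
  set c := diagEnd ℓ lam with hc
  set m := ℓ / 2 with hmdef
  have hm2 : m + m = ℓ := by obtain ⟨k, hk⟩ := hev; omega
  have hm1 : 1 ≤ m := by omega
  set S : ℕ → ℂ := fun n => ∑ j, (x j * x j) * lam j ^ n with hS
  have hsum : ∀ a b : ℕ, ∑ j, ((c ^ a) x) j * ((c ^ b) x) j = S (a + b) := by
    intro a b
    simp only [hS, diagEnd_pow_apply, hc]
    refine Finset.sum_congr rfl fun j _ => ?_
    rw [pow_add]; ring
  have hS0 : ∀ i : ℕ, i ≤ ℓ - 2 → S i = 0 := by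
    intro i hi
    have hh := h i hi
    rw [← hh]
    simp only [hS, diagEnd_pow_apply, hc]
    exact Finset.sum_congr rfl fun j _ => by ring
  have hStop : S (ℓ - 1) ≠ 0 := by
    intro h0
    apply hx
    have hv : (fun j => x j * x j) = 0 := by
      apply Matrix.eq_zero_of_forall_pow_sum_mul_pow_eq_zero hdist
      intro i
      rcases Nat.lt_or_ge (i : ℕ) (ℓ - 1) with hi | hi
      · exact hS0 i (by omega)
      · have hieq : (i : ℕ) = ℓ - 1 := by have := i.isLt; omega
        rw [hieq]; exact h0
    funext j
    exact mul_self_eq_zero.mp (congrFun hv j)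
  set L := Submodule.span ℂ (Set.range fun i : Fin m => (c ^ (i : ℕ)) x) with hL
  -- pairing of L against c^b x
  have hLpair : ∀ b : ℕ, b + m ≤ ℓ - 1 → ∀ u ∈ L, ∑ j, u j * ((c ^ b) x) j = 0 := by
    intro b hb u hu
    have hle : L ≤ LinearMap.ker (pairL ℓ ((c ^ b) x)) := by
      rw [hL, Submodule.span_le]
      rintro _ ⟨i, rfl⟩
      simp only [SetLike.mem_coe, LinearMap.mem_ker, pairL_apply]
      rw [hsum]
      exact hS0 _ (by have := i.isLt; omega)
    simpa using hle hu
  -- first goal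
  have goal1 : ∑ j, x j * ((c ^ (ℓ - 1)) x) j ≠ 0 := by
    intro h0
    apply hStop
    rw [← h0]
    simp only [hS, diagEnd_pow_apply, hc]
    exact Finset.sum_congr rfl fun j _ => by ring
  -- linear independence
  have goal2 : LinearIndependent ℂ (fun i : Fin m => (c ^ (i : ℕ)) x) := by
    rw [Fintype.linearIndependent_iff]
    intro g hg
    set M : Matrix (Fin m) (Fin m) ℂ := fun k i => S ((i : ℕ) + (ℓ - 1 - (k : ℕ))) with hM
    have hMg : M.mulVec g = 0 := by
      funext k
      have happ : pairL ℓ ((c ^ (ℓ - 1 - (k : ℕ))) x) (∑ i : Fin m, g i • (c ^ (i : ℕ)) x) = 0 := by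
        rw [hg]; simp
      rw [map_sum] at happ
      simp only [map_smul, pairL_apply, smul_eq_mul] at happ
      calc M.mulVec g k = ∑ i, M k i * g i := by
            simp [Matrix.mulVec, dotProduct]
        _ = ∑ i : Fin m, g i * ∑ j, ((c ^ (i : ℕ)) x) j * ((c ^ (ℓ - 1 - (k : ℕ))) x) j := by
            refine Finset.sum_congr rfl fun i _ => ?_
            rw [hsum, hM, mul_comm]
        _ = 0 := happ
    have hdet : M.det ≠ 0 := by
      have htri : M.BlockTriangular id := by
        intro k i hki
        have hk := k.isLt
        have : (i : ℕ) + (ℓ - 1 - (k : ℕ)) ≤ ℓ - 2 := by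
          simp only [id] at hki
          have : (i : ℕ) < (k : ℕ) := hki
          omega
        exact hS0 _ this
      rw [Matrix.det_of_upperTriangular htri]
      refine Finset.prod_ne_zero_iff.mpr fun k _ => ?_
      have hk := k.isLt
      have : (k : ℕ) + (ℓ - 1 - (k : ℕ)) = ℓ - 1 := by omega
      simpa [hM, this] using hStop
    have := Matrix.eq_zero_of_mulVec_eq_zero hdet hMg
    intro i; exact congrFun this i
  -- isotropy
  have goal3 : ∀ u ∈ L, ∀ v ∈ L, ∑ j, u j * v j = 0 := by
    intro u hu v hv
    have hle : L ≤ LinearMap.ker (pairL ℓ u) := by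
      rw [hL, Submodule.span_le]
      rintro _ ⟨i, rfl⟩
      simp only [SetLike.mem_coe, LinearMap.mem_ker, pairL_apply]
      have := hLpair (i : ℕ) (by have := i.isLt; omega) u hu
      rw [← this]
      exact Finset.sum_congr rfl fun j _ => by ring
    have := hle hv
    simp only [LinearMap.mem_ker, pairL_apply] at this
    rw [← this]
    exact Finset.sum_congr rfl fun j _ => by ring
  have goal4 : Module.finrank ℂ L = m := by
    rw [hL, finrank_span_eq_card goal2, Fintype.card_fin]
  -- last goal
  have hcmx_notin : (c ^ m) x ∉ L := by
    intro hmem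
    apply hStop
    have := hLpair (m - 1) (by omega) ((c ^ m) x) hmem
    rw [hsum] at this
    have harith : m + (m - 1) = ℓ - 1 := by omega
    rwa [harith] at this
  have goal5 : Module.finrank ℂ (LinearMap.range
      (L.mkQ.comp ((c : (Fin ℓ → ℂ) →ₗ[ℂ] Fin ℓ → ℂ).domRestrict L))) = 1 := by
    have hcc : ∀ i : Fin m, (c : (Fin ℓ → ℂ) →ₗ[ℂ] Fin ℓ → ℂ) ((c ^ (i : ℕ)) x)
        = (c ^ ((i : ℕ) + 1)) x := fun i => by
      rw [pow_succ', Module.End.mul_apply]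
    have hmapc : Submodule.map (c : (Fin ℓ → ℂ) →ₗ[ℂ] Fin ℓ → ℂ) L
        = Submodule.span ℂ (Set.range fun i : Fin m => (c ^ ((i : ℕ) + 1)) x) := by
      rw [hL, Submodule.map_span, ← Set.range_comp]
      have hfun : (⇑(c : (Fin ℓ → ℂ) →ₗ[ℂ] Fin ℓ → ℂ) ∘ fun i : Fin m => (c ^ (i : ℕ)) x)
          = fun i : Fin m => (c ^ ((i : ℕ) + 1)) x := funext fun i => hcc i
      rw [hfun]
    have hrange : LinearMap.range (L.mkQ.comp ((c : (Fin ℓ → ℂ) →ₗ[ℂ] Fin ℓ → ℂ).domRestrict L))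
        = Submodule.span ℂ {L.mkQ ((c ^ m) x)} := by
      rw [LinearMap.range_comp, LinearMap.range_domRestrict, hmapc, Submodule.map_span,
        ← Set.range_comp]
      apply le_antisymm
      · rw [Submodule.span_le]
        rintro _ ⟨i, rfl⟩
        simp only [Function.comp_apply, SetLike.mem_coe]
        rcases Nat.lt_or_ge ((i : ℕ) + 1) m with hi | hi
        · have hmem : (c ^ ((i : ℕ) + 1)) x ∈ L := by
            rw [hL]
            exact Submodule.subset_span ⟨⟨(i : ℕ) + 1, hi⟩, rfl⟩
          have hz : L.mkQ ((c ^ ((i : ℕ) + 1)) x) = 0 := by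
            rw [Submodule.mkQ_apply]
            exact (Submodule.Quotient.mk_eq_zero L).mpr hmem
          rw [hz]
          exact Submodule.zero_mem _
        · have hieq : (i : ℕ) + 1 = m := by have := i.isLt; omega
          rw [hieq]
          exact Submodule.mem_span_singleton_self _
      · rw [Submodule.span_le, Set.singleton_subset_iff]
        refine Submodule.subset_span ⟨⟨m - 1, by omega⟩, ?_⟩
        simp only [Function.comp_apply]
        have hm' : m - 1 + 1 = m := by omega
        rw [hm']
    rw [hrange]
    apply finrank_span_singleton
    rw [Ne, Submodule.mkQ_apply, Submodule.Quotient.mk_eq_zero]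
    exact hcmx_notin
  exact ⟨goal1, goal2, goal3, goal4, goal5⟩
end

section
/- Let Q be an even-dimensional ℂ-vector space with a nondegenerate symmetric bilinear form, and let c : Q → Q be a self-adjoint linear map with pairwise distinct eigenvalues (regular semisimple). For a Lagrangian subspace L ⊆ Q, let c_L : L → Q/L be the composition of c|_L with the quotient map. Then the minimum over all Lagrangians L of rank(c_L) equals 1. -/
/-!
The eigenvectors `bᵢ` of the self-adjoint `c` are pairwise orthogonal and non-isotropic. If
`c_L = 0`, then `L` is `c`-invariant and so contains an eigenvector of `c`, i.e. a multiple of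
some `bᵢ`, which cannot be isotropic: hence `rank c_L ≥ 1`.

For the upper bound, pick `w` in the kernel of the `(ℓ - 1) × ℓ` Vandermonde system
`∑ᵢ μᵢᵏ wᵢ = 0`; by Vandermonde all `wᵢ ≠ 0`. With `aᵢ² B(bᵢ, bᵢ) = wᵢ` and `v = ∑ᵢ aᵢ bᵢ`,
`B(cᵏ v, cˡ v) = ∑ᵢ μᵢᵏ⁺ˡ wᵢ = 0` for `k + l < ℓ - 1`, so the Krylov space spanned by
`v, c v, …, c^(ℓ/2 - 1) v` is Lagrangian, and `c` maps it into itself plus the line of `c^(ℓ/2) v`.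
-/

open Module Submodule

section

variable {K V : Type*} [Field K] [AddCommGroup V] [Module K V]

def krylovSubspace (c : End K V) (v : V) (m : ℕ) : Submodule K V :=
  span K (Set.range fun k : Fin m ↦ (c ^ (k : ℕ)) v)

lemma map_krylovSubspace_le (c : End K V) (v : V) (m : ℕ) :
    (krylovSubspace c v m).map c ≤ krylovSubspace c v m ⊔ K ∙ (c ^ m) v := by
  rw [krylovSubspace, map_span, span_le]
  rintro _ ⟨_, ⟨k, rfl⟩, rfl⟩
  rw [← Module.End.mul_apply, ← pow_succ']
  rcases lt_or_eq_of_le (Nat.succ_le_of_lt k.isLt) with hk | hk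
  · exact mem_sup_left (subset_span ⟨⟨k + 1, hk⟩, rfl⟩)
  · rw [show (k : ℕ) + 1 = m from hk]
    exact mem_sup_right (mem_span_singleton_self _)

lemma range_mkQ_comp_domRestrict_eq_bot_iff {L : Submodule K V} {c : End K V} :
    LinearMap.range (L.mkQ.comp (c.domRestrict L)) = ⊥ ↔ L.map c ≤ L := by
  rw [LinearMap.range_comp, LinearMap.range_domRestrict, eq_bot_iff, map_le_iff_le_comap,
    comap_bot, ker_mkQ]

lemma finrank_range_mkQ_comp_domRestrict_le_one {L : Submodule K V} {c : End K V} {x : V}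
    (h : L.map c ≤ L ⊔ K ∙ x) :
    finrank K (LinearMap.range (L.mkQ.comp (c.domRestrict L))) ≤ 1 := by
  have hle : LinearMap.range (L.mkQ.comp (c.domRestrict L)) ≤ K ∙ L.mkQ x := by
    rw [LinearMap.range_comp, LinearMap.range_domRestrict]
    refine (map_mono h).trans ?_
    rw [Submodule.map_sup, mkQ_map_self, bot_sup_eq, map_span, Set.image_singleton]
  exact (finrank_mono hle).trans
    ((finrank_span_le_card {L.mkQ x}).trans (by rw [Set.toFinset_card, Set.card_singleton]))

lemma exists_mem_eigenvector_of_map_le [IsAlgClosed K] [FiniteDimensional K V]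
    {L : Submodule K V} {c : End K V} (hL : L ≠ ⊥) (h : L.map c ≤ L) :
    ∃ v ∈ L, v ≠ 0 ∧ ∃ t : K, c v = t • v := by
  have : Nontrivial L := nontrivial_iff_ne_bot.mpr hL
  obtain ⟨t, ht⟩ := End.exists_eigenvalue (c.restrict (map_le_iff_le_comap.mp h))
  obtain ⟨x, hx⟩ := ht.exists_hasEigenvector
  refine ⟨x, x.2, by simpa using hx.2, t, ?_⟩
  simpa using congrArg Subtype.val hx.apply_eq_smul

lemma apply_eq_zero_of_mem_span {B : LinearMap.BilinForm K V} {s : Set V}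
    (h : ∀ x ∈ s, ∀ y ∈ s, B x y = 0) : ∀ x ∈ span K s, ∀ y ∈ span K s, B x y = 0 := by
  have hflip : ∀ y ∈ s, ∀ x ∈ span K s, B x y = 0 := fun y hy x hx ↦
    (span_le (p := LinearMap.ker (B.flip y))).mpr (fun x' hx' ↦ h x' hx' y hy) hx
  exact fun x hx y hy ↦ (span_le (p := LinearMap.ker (B x))).mpr (fun y' hy' ↦ hflip y' hy' x hx) hy

section Eigenbasis

variable {ι : Type*} {B : LinearMap.BilinForm K V} {c : End K V} {μ : ι → K}

lemma LinearMap.IsAdjointPair.isOrthoᵢ_of_eigenvectors (hsa : B.IsAdjointPair B c c)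
    (hμ : Function.Injective μ) {e : ι → V} (heig : ∀ i, c (e i) = μ i • e i) :
    B.IsOrthoᵢ e := by
  intro i j hij
  have h := hsa (e i) (e j)
  rw [heig, heig, map_smul, map_smul, LinearMap.smul_apply, smul_eq_mul, smul_eq_mul] at h
  exact (mul_eq_zero.mp (by linear_combination h : (μ i - μ j) * B (e i) (e j) = 0)).resolve_left
    (sub_ne_zero.mpr (hμ.ne hij))

variable {b : Basis ι K V}

lemma repr_apply_of_eigenbasis (heig : ∀ i, c (b i) = μ i • b i) (x : V) (i : ι) :
    b.repr (c x) i = μ i * b.repr x i := by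
  have : (b.coord i).comp c = μ i • b.coord i := b.ext fun j ↦ by
    rcases eq_or_ne j i with rfl | hji
    · simp [heig]
    · simp [heig, hji.symm]
  exact LinearMap.congr_fun this x

lemma eigenvalue_eq_of_repr_ne_zero (heig : ∀ i, c (b i) = μ i • b i) {v : V} {t : K}
    (hv : c v = t • v) {i : ι} (hi : b.repr v i ≠ 0) : μ i = t := by
  have h := repr_apply_of_eigenbasis heig v i
  rw [hv, map_smul, Finsupp.smul_apply, smul_eq_mul] at h
  exact (mul_right_cancel₀ hi h).symm

lemma eq_smul_basis_of_eigenvector (hμ : Function.Injective μ)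
    (heig : ∀ i, c (b i) = μ i • b i) {v : V} {t : K} (hv : c v = t • v) {i : ι}
    (hi : b.repr v i ≠ 0) : v = b.repr v i • b i := by
  refine b.ext_elem fun j ↦ ?_
  rcases eq_or_ne j i with rfl | hji
  · simp
  · rw [map_smul, b.repr_self, Finsupp.smul_apply, Finsupp.single_eq_of_ne hji, smul_zero]
    by_contra hj
    exact hji (hμ ((eigenvalue_eq_of_repr_ne_zero heig hv hj).trans
      (eigenvalue_eq_of_repr_ne_zero heig hv hi).symm))

lemma apply_self_ne_zero_of_eigenvector (hsa : B.IsAdjointPair B c c) (hnd : B.SeparatingLeft)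
    (hμ : Function.Injective μ) (heig : ∀ i, c (b i) = μ i • b i) {v : V} {t : K}
    (hv : c v = t • v) (hv0 : v ≠ 0) : B v v ≠ 0 := by
  obtain ⟨i, hi⟩ : ∃ i, b.repr v i ≠ 0 := by
    by_contra! h
    exact hv0 (b.repr.injective (by ext i; simp [h i]))
  have hii := (hsa.isOrthoᵢ_of_eigenvectors hμ heig).not_isOrtho_basis_self_of_separatingLeft hnd i
  rw [eq_smul_basis_of_eigenvector hμ heig hv hi]
  simpa [hi] using hii

lemma one_le_finrank_range_mkQ_comp_domRestrict [IsAlgClosed K] [FiniteDimensional K V]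
    (hsa : B.IsAdjointPair B c c) (hnd : B.SeparatingLeft) (hμ : Function.Injective μ)
    (heig : ∀ i, c (b i) = μ i • b i) {L : Submodule K V} (hL : L ≠ ⊥)
    (hiso : ∀ u ∈ L, ∀ v ∈ L, B u v = 0) :
    1 ≤ finrank K (LinearMap.range (L.mkQ.comp (c.domRestrict L))) := by
  rw [one_le_finrank_iff, Ne, range_mkQ_comp_domRestrict_eq_bot_iff]
  intro hinv
  obtain ⟨v, hvL, hv0, t, hv⟩ := exists_mem_eigenvector_of_map_le hL hinv
  exact apply_self_ne_zero_of_eigenvector hsa hnd hμ heig hv hv0 (hiso v hvL v hvL)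

end Eigenbasis

section Vandermonde

variable {n : ℕ}

lemma exists_ne_zero_sum_pow_mul_eq_zero (μ : Fin (n + 1) → K) :
    ∃ w : Fin (n + 1) → K, w ≠ 0 ∧ ∀ k < n, ∑ i, μ i ^ k * w i = 0 := by
  let A : Matrix (Fin n) (Fin (n + 1)) K := .of fun k i ↦ μ i ^ (k : ℕ)
  obtain ⟨w, hw, hw0⟩ := (Submodule.ne_bot_iff _).mp
    (LinearMap.ker_ne_bot_of_finrank_lt (f := A.mulVecLin) (by simp))
  refine ⟨w, hw0, fun k hk ↦ ?_⟩
  simpa [A, Matrix.mulVec, dotProduct] using congrFun (LinearMap.mem_ker.mp hw) ⟨k, hk⟩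

lemma ne_zero_of_sum_pow_mul_eq_zero {μ w : Fin (n + 1) → K} (hμ : Function.Injective μ)
    (hw : w ≠ 0) (h : ∀ k < n, ∑ i, μ i ^ k * w i = 0) (i : Fin (n + 1)) : w i ≠ 0 := by
  intro hi
  have hrest : w ∘ i.succAbove = 0 := by
    refine Matrix.eq_zero_of_forall_pow_sum_mul_pow_eq_zero
      (hμ.comp (Fin.succAbove_right_injective (p := i))) fun k ↦ ?_
    have hk := h k k.isLt
    rw [Fin.sum_univ_succAbove _ i, hi, mul_zero, zero_add] at hk
    simpa [mul_comm] using hk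
  refine hw (funext fun j ↦ ?_)
  rcases eq_or_ne j i with rfl | hj
  · exact hi
  · obtain ⟨j, rfl⟩ := Fin.exists_succAbove_eq hj
    exact congrFun hrest j

lemma exists_forall_ne_zero_sum_pow_mul_eq_zero {μ : Fin (n + 1) → K}
    (hμ : Function.Injective μ) :
    ∃ w : Fin (n + 1) → K, (∀ i, w i ≠ 0) ∧ ∀ k < n, ∑ i, μ i ^ k * w i = 0 := by
  obtain ⟨w, hw0, hw⟩ := exists_ne_zero_sum_pow_mul_eq_zero μ
  exact ⟨w, ne_zero_of_sum_pow_mul_eq_zero hμ hw0 hw, hw⟩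

end Vandermonde

section Krylov

variable {ι : Type*} [Fintype ι] {B : LinearMap.BilinForm K V} {c : End K V} {b : Basis ι K V}
  {μ : ι → K}

lemma pow_apply_sum_smul (heig : ∀ i, c (b i) = μ i • b i) (k : ℕ) (a : ι → K) :
    (c ^ k) (∑ i, a i • b i) = ∑ i, (μ i ^ k * a i) • b i := by
  induction k with
  | zero => simp
  | succ k ih =>
    rw [pow_succ', End.mul_apply, ih, map_sum]
    refine Finset.sum_congr rfl fun i _ ↦ ?_
    rw [map_smul, heig, smul_smul, pow_succ, mul_right_comm]

lemma apply_sum_smul_sum_smul (hB : B.IsOrthoᵢ b) (x y : ι → K) :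
    B (∑ i, x i • b i) (∑ i, y i • b i) = ∑ i, x i * y i * B (b i) (b i) := by
  simp only [map_sum, map_smul, LinearMap.sum_apply, LinearMap.smul_apply, smul_eq_mul]
  refine Finset.sum_congr rfl fun i _ ↦ ?_
  rw [Finset.sum_eq_single i (fun j _ hj ↦ by rw [hB hj, mul_zero]) (by simp)]
  ring

end Krylov

section Construction

variable {n : ℕ} {B : LinearMap.BilinForm K V} {c : End K V} {b : Basis (Fin (n + 1)) K V}
  {μ : Fin (n + 1) → K}

lemma linearIndependent_pow_apply_sum_smul (hμ : Function.Injective μ)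
    (heig : ∀ i, c (b i) = μ i • b i) {a : Fin (n + 1) → K} (ha : ∀ i, a i ≠ 0) :
    LinearIndependent K fun k : Fin (n + 1) ↦ (c ^ (k : ℕ)) (∑ i, a i • b i) := by
  rw [Fintype.linearIndependent_iff]
  intro g hg
  have hcoef : ∀ i, (∑ k : Fin (n + 1), μ i ^ (k : ℕ) * g k) * a i = 0 := by
    refine Fintype.linearIndependent_iff.mp b.linearIndependent _ ?_
    rw [← hg]
    simp only [pow_apply_sum_smul heig, Finset.smul_sum, smul_smul, Finset.sum_mul]
    rw [Finset.sum_comm]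
    exact Finset.sum_congr rfl fun i _ ↦ by
      rw [Finset.sum_smul]
      exact Finset.sum_congr rfl fun k _ ↦ by rw [mul_left_comm, mul_assoc]
  exact congrFun (Matrix.eq_zero_of_forall_index_sum_pow_mul_eq_zero hμ
    fun i ↦ (mul_eq_zero.mp (hcoef i)).resolve_right (ha i))

lemma exists_isotropic_krylovSubspace [IsAlgClosed K] (hsa : B.IsAdjointPair B c c)
    (hnd : B.SeparatingLeft) (hμ : Function.Injective μ) (heig : ∀ i, c (b i) = μ i • b i)
    {m : ℕ} (hm : 2 * m ≤ n + 1) :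
    ∃ v : V, (∀ x ∈ krylovSubspace c v m, ∀ y ∈ krylovSubspace c v m, B x y = 0) ∧
      finrank K (krylovSubspace c v m) = m := by
  have horth := hsa.isOrthoᵢ_of_eigenvectors hμ heig
  obtain ⟨w, hw0, hw⟩ := exists_forall_ne_zero_sum_pow_mul_eq_zero hμ
  choose a ha using fun i ↦ IsAlgClosed.exists_pow_nat_eq (w i / B (b i) (b i)) two_pos
  have haw : ∀ i, a i ^ 2 * B (b i) (b i) = w i := fun i ↦ by
    rw [ha, div_mul_cancel₀ _ (horth.not_isOrtho_basis_self_of_separatingLeft hnd i)]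
  have ha0 : ∀ i, a i ≠ 0 := fun i hai ↦ hw0 i (by rw [← haw, hai]; ring)
  refine ⟨∑ i, a i • b i, apply_eq_zero_of_mem_span ?_, ?_⟩
  · rintro _ ⟨k, rfl⟩ _ ⟨l, rfl⟩
    dsimp only
    rw [pow_apply_sum_smul heig, pow_apply_sum_smul heig, apply_sum_smul_sum_smul horth,
      ← hw (k + l) (by omega)]
    exact Finset.sum_congr rfl fun i _ ↦ by rw [pow_add, ← haw]; ring
  · have hmn : m ≤ n + 1 := by omega
    have hli : LinearIndependent K fun k : Fin m ↦ (c ^ (k : ℕ)) (∑ i, a i • b i) :=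
      (linearIndependent_pow_apply_sum_smul hμ heig ha0).comp (Fin.castLE hmn)
        (Fin.castLE_injective hmn)
    rw [krylovSubspace, finrank_span_eq_card hli, Fintype.card_fin]

end Construction

end

theorem stmt3_general (Q : Type*) [AddCommGroup Q] [Module ℂ Q] [FiniteDimensional ℂ Q]
    (ℓ : ℕ) (hev : Even ℓ) (hpos : 0 < ℓ)
    (B : Q →ₗ[ℂ] Q →ₗ[ℂ] ℂ)
    (hnd : ∀ u, (∀ v, B u v = 0) → u = 0)
    (c : Q →ₗ[ℂ] Q)
    (hsa : ∀ u v, B (c u) v = B u (c v))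
    (b : Module.Basis (Fin ℓ) ℂ Q) (μ : Fin ℓ → ℂ) (hμ : Function.Injective μ)
    (heig : ∀ i, c (b i) = μ i • b i) :
    IsLeast {r : ℕ | ∃ L : Submodule ℂ Q,
      (∀ u ∈ L, ∀ v ∈ L, B u v = 0) ∧
      Module.finrank ℂ L = ℓ / 2 ∧
      Module.finrank ℂ (LinearMap.range (L.mkQ.comp (c.domRestrict L))) = r} 1 := by
  obtain ⟨n, rfl⟩ := Nat.exists_eq_add_one.mpr hpos
  obtain ⟨m, hm⟩ := hev
  have lower_bound : ∀ L : Submodule ℂ Q, (∀ u ∈ L, ∀ v ∈ L, B u v = 0) →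
      finrank ℂ L = (n + 1) / 2 → 1 ≤ finrank ℂ (LinearMap.range (L.mkQ.comp (c.domRestrict L))) :=
    fun L hiso hdim ↦ one_le_finrank_range_mkQ_comp_domRestrict hsa hnd hμ heig
      (fun hL ↦ by rw [hL, finrank_bot] at hdim; omega) hiso
  obtain ⟨v, hiso, hdim⟩ := exists_isotropic_krylovSubspace hsa hnd hμ heig (m := m) (by omega)
  refine ⟨⟨_, hiso, by omega, le_antisymm ?_ (lower_bound _ hiso (by omega))⟩, ?_⟩
  · exact finrank_range_mkQ_comp_domRestrict_le_one (map_krylovSubspace_le c v m)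
  · rintro r ⟨L, hiso, hdim, rfl⟩
    exact lower_bound L hiso hdim

/-- Let `Q` be an even-dimensional complex vector space with a nondegenerate
symmetric bilinear form `B`, and `c : Q → Q` self-adjoint with pairwise distinct
eigenvalues (it diagonalizes in a basis `b` with distinct eigenvalues `μ`).
Then the minimum over Lagrangian subspaces `L` of the rank of the
composition `c_L : L → Q → Q/L` equals `1`. -/
theorem stmt3 (Q : Type*) [AddCommGroup Q] [Module ℂ Q] [FiniteDimensional ℂ Q]
    (ℓ : ℕ) (hℓ : Module.finrank ℂ Q = ℓ) (hev : Even ℓ) (hpos : 0 < ℓ)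
    (B : Q →ₗ[ℂ] Q →ₗ[ℂ] ℂ)
    (hsymm : ∀ u v, B u v = B v u)
    (hnd : ∀ u, (∀ v, B u v = 0) → u = 0)
    (c : Q →ₗ[ℂ] Q)
    (hsa : ∀ u v, B (c u) v = B u (c v))
    (b : Module.Basis (Fin ℓ) ℂ Q) (μ : Fin ℓ → ℂ) (hμ : Function.Injective μ)
    (heig : ∀ i, c (b i) = μ i • b i) :
    IsLeast {r : ℕ | ∃ L : Submodule ℂ Q,
      (∀ u ∈ L, ∀ v ∈ L, B u v = 0) ∧
      Module.finrank ℂ L = ℓ / 2 ∧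
      Module.finrank ℂ (LinearMap.range (L.mkQ.comp (c.domRestrict L))) = r} 1 :=
  stmt3_general Q ℓ hev hpos B hnd c hsa b μ hμ heig
end

section
/- Let V be a finite-dimensional ℂ-vector space and let w : V → V be a linear map of finite order. Then for every positive integer d, the limit as t → 1 of det(id_V − t^d·w)/det(id_V − t·w) exists and equals d^{dim ker(w − id_V)}. -/
open Module Polynomial

universe u
lemma exists_eigenbasis (V : Type u) [AddCommGroup V] [Module ℂ V] [FiniteDimensional ℂ V]
    (w : Module.End ℂ V) (k : ℕ) (hk : 1 ≤ k) (hw : w ^ k = 1) :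
    ∃ (ι : Type u) (_ : Fintype ι) (b : Basis ι ℂ V) (ζ : ι → ℂ),
      ∀ i, w (b i) = ζ i • b i := by
  have hsq : Squarefree (X ^ k - 1 : ℂ[X]) :=
    (Polynomial.X_pow_sub_one_separable_iff.mpr
      ((Nat.cast_ne_zero (R := ℂ)).mpr (by omega))).squarefree
  have hss : w.IsSemisimple :=
    Module.End.isSemisimple_of_squarefree_aeval_eq_zero hsq (by simp [hw])
  have hmax : ∀ μ : ℂ, w.maxGenEigenspace μ = w.eigenspace μ := fun μ =>
    hss.isFinitelySemisimple.maxGenEigenspace_eq_eigenspace μ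
  have htop : ⨆ μ : ℂ, w.eigenspace μ = ⊤ := by
    simp_rw [← hmax]; exact Module.End.iSup_maxGenEigenspace_eq_top w
  have hint : DirectSum.IsInternal (fun μ : ℂ => w.eigenspace μ) :=
    DirectSum.isInternal_submodule_of_iSupIndep_of_iSup_eq_top (w.eigenspaces_iSupIndep) htop
  let β : ∀ μ : ℂ, Basis (Module.Free.ChooseBasisIndex ℂ (w.eigenspace μ)) ℂ (w.eigenspace μ) :=
    fun μ => Module.Free.chooseBasis ℂ _
  let b := hint.collectedBasis β
  refine ⟨_, FiniteDimensional.fintypeBasisIndex b, b, fun p => p.1, fun p => ?_⟩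
  exact Module.End.mem_eigenspace_iff.mp (hint.collectedBasis_mem β p)

open Finset in
lemma finrank_ker_eq (V : Type u) [AddCommGroup V] [Module ℂ V] [FiniteDimensional ℂ V]
    (w : Module.End ℂ V) {ι : Type u} [Fintype ι] (b : Basis ι ℂ V) (ζ : ι → ℂ)
    (hζ : ∀ i, w (b i) = ζ i • b i) [DecidablePred fun i : ι => ζ i = 1] :
    Module.finrank ℂ (LinearMap.ker (w - 1)) = (univ.filter fun i => ζ i = 1).card := by
  classical
  have hker : LinearMap.ker (w - 1) =
      Submodule.span ℂ (Set.range fun i : {i // ζ i = 1} => b i.1) := by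
    apply le_antisymm
    · intro v hv
      have hv' : w v = v := by
        have := LinearMap.mem_ker.mp hv
        rw [LinearMap.sub_apply, sub_eq_zero] at this
        simpa using this
      have hwv : w v = ∑ i, (b.repr v i * ζ i) • b i := by
        conv_lhs => rw [← b.sum_repr v]
        rw [map_sum]
        simp [hζ, smul_smul]
      have hc : ∀ j, ζ j ≠ 1 → b.repr v j = 0 := by
        intro j hj
        have h1 : b.repr (w v) j = b.repr v j * ζ j := by
          rw [hwv]
          simp [Finsupp.single_apply]
        rw [hv'] at h1
        have h2 : b.repr v j * (ζ j - 1) = 0 := by linear_combination -h1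
        rcases mul_eq_zero.mp h2 with h | h
        · exact h
        · exact absurd (sub_eq_zero.mp h) hj
      have hvs : v = ∑ i, b.repr v i • b i := (b.sum_repr v).symm
      rw [hvs]
      refine Submodule.sum_mem _ fun i _ => ?_
      by_cases h : ζ i = 1
      · exact Submodule.smul_mem _ _ (Submodule.subset_span ⟨⟨i, h⟩, rfl⟩)
      · rw [hc i h, zero_smul]; exact Submodule.zero_mem _
    · rw [Submodule.span_le]
      rintro x ⟨i, rfl⟩
      simp [LinearMap.mem_ker, hζ, i.2]
  have li : LinearIndependent ℂ (fun i : {i // ζ i = 1} => b i.1) :=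
    b.linearIndependent.comp _ Subtype.val_injective
  rw [hker, finrank_span_eq_card li, Fintype.card_subtype]

lemma det_one_sub_smul (V : Type u) [AddCommGroup V] [Module ℂ V] [FiniteDimensional ℂ V]
    (w : Module.End ℂ V) {ι : Type u} [Fintype ι] (b : Basis ι ℂ V) (ζ : ι → ℂ)
    (hζ : ∀ i, w (b i) = ζ i • b i) (t : ℂ) :
    LinearMap.det ((1 : Module.End ℂ V) - t • w) = ∏ i, (1 - t * ζ i) := by
  classical
  rw [← LinearMap.det_toMatrix b]
  have hm : LinearMap.toMatrix b b ((1 : Module.End ℂ V) - t • w) =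
      Matrix.diagonal (fun i => 1 - t * ζ i) := by
    ext i j
    rw [LinearMap.toMatrix_apply, Matrix.diagonal]
    by_cases h : i = j
    · subst h; simp [hζ, smul_smul, Finsupp.single_apply]
    · simp [hζ, smul_smul, Finsupp.single_apply, h, Ne.symm h]
  rw [hm, Matrix.det_diagonal]


open Filter Finset in
/-- Let `V` be a finite-dimensional complex vector space and `w : V → V` a linear
map of finite order. For every positive integer `d`, the limit as `t → 1` of
`det(id − t^d • w)/det(id − t • w)` exists and equals `d ^ dim ker(w − id)`. -/
theorem stmt5 (V : Type*) [AddCommGroup V] [Module ℂ V] [FiniteDimensional ℂ V]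
    (w : Module.End ℂ V) (k : ℕ) (hk : 1 ≤ k) (hw : w ^ k = 1)
    (d : ℕ) (hd : 1 ≤ d) :
    Filter.Tendsto
      (fun t : ℂ => LinearMap.det ((1 : Module.End ℂ V) - t ^ d • w) /
        LinearMap.det ((1 : Module.End ℂ V) - t • w))
      (nhdsWithin 1 {(1 : ℂ)}ᶜ)
      (nhds ((d : ℂ) ^ Module.finrank ℂ (LinearMap.ker (w - 1)))) := by
  classical
  obtain ⟨ι, _, b, ζ, hζ⟩ := exists_eigenbasis V w k hk hw
  rw [finrank_ker_eq V w b ζ hζ]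
  set g : ℂ → ℂ := fun t =>
    ∏ i, (if ζ i = 1 then ∑ j ∈ Finset.range d, t ^ j else (1 - t ^ d * ζ i) / (1 - t * ζ i))
    with hg
  have hgt : Tendsto g (nhds 1) (nhds ((d : ℂ) ^ #(filter (fun i => ζ i = 1) univ))) := by
    have h1 : Tendsto g (nhds 1) (nhds (∏ i, if ζ i = 1 then (d : ℂ) else 1)) := by
      apply tendsto_finset_prod
      intro i _
      by_cases h : ζ i = 1
      · simp only [h, if_true]
        have hc : Continuous fun t : ℂ => ∑ j ∈ Finset.range d, t ^ j :=
          continuous_finset_sum _ fun j _ => continuous_pow j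
        simpa using hc.tendsto 1
      · simp only [h, if_false]
        have hc1 : Tendsto (fun t : ℂ => 1 - t ^ d * ζ i) (nhds 1) (nhds (1 - 1 ^ d * ζ i)) :=
          (continuous_const.sub ((continuous_pow d).mul continuous_const)).tendsto 1
        have hc2 : Tendsto (fun t : ℂ => 1 - t * ζ i) (nhds 1) (nhds (1 - 1 * ζ i)) :=
          (continuous_const.sub (continuous_id.mul continuous_const)).tendsto 1
        have hne : (1 : ℂ) - 1 * ζ i ≠ 0 := by
          rw [one_mul]
          exact sub_ne_zero.mpr (Ne.symm h)
        have h1' : ((1 : ℂ) - 1 ^ d * ζ i) / (1 - 1 * ζ i) = 1 := by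
          rw [one_pow]; exact div_self hne
        have h2 := hc1.div hc2 hne
        rw [h1'] at h2
        exact h2
    have : (∏ i, if ζ i = 1 then (d : ℂ) else 1) = (d : ℂ) ^ #(filter (fun i => ζ i = 1) univ) := by
      rw [Finset.prod_ite, Finset.prod_const, Finset.prod_const, one_pow, mul_one]
    rwa [this] at h1
  have hev : ∀ᶠ t in nhdsWithin 1 {(1 : ℂ)}ᶜ,
      LinearMap.det ((1 : Module.End ℂ V) - t ^ d • w) /
        LinearMap.det ((1 : Module.End ℂ V) - t • w) = g t := by
    have hU : ∀ᶠ t in nhds (1 : ℂ), ∀ i, ζ i ≠ 1 → 1 - t * ζ i ≠ 0 := by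
      rw [Filter.eventually_all]
      intro i
      by_cases h : ζ i = 1
      · filter_upwards with t ht; exact absurd h ht
      · have : (fun t : ℂ => 1 - t * ζ i) 1 ≠ 0 := by
          simp only [one_mul]; exact sub_ne_zero.mpr (Ne.symm h)
        filter_upwards [(continuous_const.sub (continuous_id.mul
          continuous_const)).continuousAt.eventually_ne this] with t ht _
        exact ht
    filter_upwards [hU.filter_mono nhdsWithin_le_nhds, self_mem_nhdsWithin] with t ht ht1
    replace ht1 : t ≠ 1 := ht1
    have hne : ∀ i, 1 - t * ζ i ≠ 0 := by
      intro i
      by_cases h : ζ i = 1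
      · rw [h, mul_one]; exact sub_ne_zero.mpr (Ne.symm ht1)
      · exact ht i h
    rw [det_one_sub_smul V w b ζ hζ, det_one_sub_smul V w b ζ hζ, ← Finset.prod_div_distrib, hg]
    refine Finset.prod_congr rfl fun i _ => ?_
    by_cases h : ζ i = 1
    · rw [if_pos h, h, mul_one, mul_one, div_eq_iff (sub_ne_zero.mpr (Ne.symm ht1))]
      linear_combination geom_sum_mul t d
    · rw [if_neg h]
  exact Filter.Tendsto.congr' (hev.mono fun t h => h.symm) (hgt.mono_left nhdsWithin_le_nhds)
end

section
/- Let 𝔤 be a finite-dimensional complex Lie algebra, let 𝔫 = ⊕_{i=1}^{N} 𝔫(i) ⊆ 𝔤 be a finite-dimensional graded nilpotent subalgebra with [𝔫(i), 𝔫(j)] ⊆ 𝔫(i+j) (and 𝔫(i) = 0 for i > N), and let x ∈ 𝔤 be an element such that [𝔫(i), x] ⊆ ⊕_{j ≥ i} 𝔫(j) for all i, and such that for each i the composite map 𝔫(i) → ⊕_{j≥i} 𝔫(j) → 𝔫(i), y ↦ (component of [y,x] in 𝔫(i)), is a linear isomorphism. Then the map φ : 𝔫 → 𝔫 defined by φ(y)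 = e^{ad(y)}(x) − x is a bijection. -/
/-!
Filter `𝔫` by `F i = ⊕_{j ≥ i} 𝔫(j)`, so that `F (N + 1) = 0`. Because
`[F a, F b] ⊆ F (a + b)`, `φ(y) - φ(y') ≡ [y - y', x] (mod F (i + 1))` whenever `y - y' ∈ F i`:
the higher terms of the exponential are at least one degree deeper. By hypothesis `[·, x]`
induces bijections `F i / F (i + 1) → F i / F (i + 1)`, so injectivity and surjectivity of `φ`
follow by successive approximation along the filtration, which stops after `N` steps.
-/

section FilteredPerturbation

variable {R M : Type*} [Ring R] [AddCommGroup M] [Module R M]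
  {F : ℕ → Submodule R M} {N : ℕ} {φ T : M → M}

theorem injOn_of_injective_on_graded (hFN : F (N + 1) = ⊥)
    (happrox : ∀ i, ∀ y ∈ F 1, ∀ y' ∈ F 1, y - y' ∈ F i →
      φ y - φ y' - T (y - y') ∈ F (i + 1))
    (hT : ∀ i, 1 ≤ i → i ≤ N → ∀ u ∈ F i, T u ∈ F (i + 1) → u ∈ F (i + 1)) :
    Set.InjOn φ (F 1) := by
  intro y hy y' hy' h
  have hdeep : ∀ k ≤ N, y - y' ∈ F (k + 1) := by
    intro k hk
    induction k with
    | zero => exact sub_mem hy hy'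
    | succ k ih =>
      have hd := ih (by omega)
      refine hT (k + 1) (by omega) hk _ hd ?_
      simpa [h] using happrox (k + 1) y hy y' hy' hd
  simpa [hFN, sub_eq_zero] using hdeep N le_rfl

theorem surjOn_of_surjective_on_graded (hF : Antitone F) (hFN : F (N + 1) = ⊥)
    (hφ : Set.MapsTo φ (F 1) (F 1))
    (happrox : ∀ i, ∀ y ∈ F 1, ∀ y' ∈ F 1, y - y' ∈ F i →
      φ y - φ y' - T (y - y') ∈ F (i + 1))
    (hT : ∀ i, 1 ≤ i → i ≤ N → ∀ z ∈ F i, ∃ u ∈ F i, z - T u ∈ F (i + 1)) :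
    Set.SurjOn φ (F 1) (F 1) := by
  intro z hz
  have hclose : ∀ k ≤ N, ∃ y ∈ F 1, z - φ y ∈ F (k + 1) := by
    intro k hk
    induction k with
    | zero => exact ⟨0, zero_mem _, sub_mem hz (hφ (zero_mem _))⟩
    | succ k ih =>
      obtain ⟨y, hy, hzy⟩ := ih (by omega)
      obtain ⟨u, hu, hzu⟩ := hT (k + 1) (by omega) hk _ hzy
      have hu1 : u ∈ F 1 := hF (by omega) hu
      have hyu :=
        happrox (k + 1) (y + u) (add_mem hy hu1) y hy (by rwa [add_sub_cancel_left])
      rw [add_sub_cancel_left] at hyu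
      refine ⟨y + u, add_mem hy hu1, ?_⟩
      have e : z - φ (y + u) = (z - φ y - T u) - (φ (y + u) - φ y - T u) := by abel
      exact e ▸ sub_mem hzu hyu
  obtain ⟨y, hy, h⟩ := hclose N le_rfl
  rw [hFN, Submodule.mem_bot, sub_eq_zero] at h
  exact ⟨y, hy, h.symm⟩

end FilteredPerturbation

section GradedTail

variable {R M : Type*} [Ring R] [AddCommGroup M] [Module R M]

def gradedTail (n : ℕ → Submodule R M) (i : ℕ) : Submodule R M := ⨆ j ∈ Set.Ici i, n j

variable {n : ℕ → Submodule R M} {i : ℕ} {z : M}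

theorem le_gradedTail {j : ℕ} (h : i ≤ j) : n j ≤ gradedTail n i :=
  le_iSup₂_of_le (f := fun j (_ : j ∈ Set.Ici i) => n j) j h le_rfl

theorem gradedTail_le_iff {P : Submodule R M} : gradedTail n i ≤ P ↔ ∀ j, i ≤ j → n j ≤ P :=
  iSup₂_le_iff

theorem gradedTail_antitone : Antitone (gradedTail n) := fun _ _ hij =>
  gradedTail_le_iff.2 fun _ hl => le_gradedTail (hij.trans hl)

theorem gradedTail_eq_bot {N : ℕ} (hnN : ∀ j, N < j → n j = ⊥) (hi : N < i) :
    gradedTail n i = ⊥ :=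
  le_bot_iff.1 <| gradedTail_le_iff.2 fun j hj => (hnN j (hi.trans_le hj)).le

theorem iSup_Icc_eq_gradedTail_one {N : ℕ} (hnN : ∀ j, N < j → n j = ⊥) :
    ⨆ j ∈ Finset.Icc 1 N, n j = gradedTail n 1 := by
  refine le_antisymm (iSup₂_le fun j hj => le_gradedTail (Finset.mem_Icc.1 hj).1) ?_
  refine gradedTail_le_iff.2 fun j hj => ?_
  by_cases hjN : j ≤ N
  · exact le_iSup₂_of_le (f := fun j (_ : j ∈ Finset.Icc 1 N) => n j) j
      (Finset.mem_Icc.2 ⟨hj, hjN⟩) le_rfl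
  · simp [hnN j (by omega)]

variable {p : ℕ → M →ₗ[R] M}

theorem proj_mem_of_mem_gradedTail (hproj_id : ∀ i, ∀ z ∈ n i, p i z = z)
    (hproj_zero : ∀ i j, i ≠ j → ∀ z ∈ n j, p i z = 0) (hz : z ∈ gradedTail n i) :
    p i z ∈ n i := by
  refine (gradedTail_le_iff (P := (n i).comap (p i))).2 (fun j hj y hy => ?_) hz
  rcases hj.eq_or_lt with rfl | hlt
  · simpa [hproj_id _ y hy] using hy
  · simp [hproj_zero i j hlt.ne y hy]

theorem sub_proj_mem_gradedTail_succ (hproj_id : ∀ i, ∀ z ∈ n i, p i z = z)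
    (hproj_zero : ∀ i j, i ≠ j → ∀ z ∈ n j, p i z = 0) (hz : z ∈ gradedTail n i) :
    z - p i z ∈ gradedTail n (i + 1) := by
  refine (gradedTail_le_iff (P := (gradedTail n (i + 1)).comap (LinearMap.id - p i))).2
    (fun j hj y hy => ?_) hz
  rcases hj.eq_or_lt with rfl | hlt
  · simp [hproj_id _ y hy]
  · simpa [hproj_zero i j hlt.ne y hy] using le_gradedTail hlt hy

theorem proj_eq_zero_of_mem_gradedTail_succ
    (hproj_zero : ∀ i j, i ≠ j → ∀ z ∈ n j, p i z = 0) (hz : z ∈ gradedTail n (i + 1)) :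
    p i z = 0 :=
  (gradedTail_le_iff (P := LinearMap.ker (p i))).2
    (fun j hj y hy => hproj_zero i j (by omega) y hy) hz

end GradedTail

section Lie

variable {R L : Type*} [CommRing R] [LieRing L] [LieAlgebra R L] {n : ℕ → Submodule R L}
  {x y y' : L}

theorem lie_mem_gradedTail (hbracket : ∀ i j, ∀ y ∈ n i, ∀ z ∈ n j, ⁅y, z⁆ ∈ n (i + j))
    {a b : ℕ} {z : L} (hy : y ∈ gradedTail n a) (hz : z ∈ gradedTail n b) :
    ⁅y, z⁆ ∈ gradedTail n (a + b) := by
  have hpiece : ∀ j, a ≤ j → ∀ y ∈ n j, ⁅y, z⁆ ∈ gradedTail n (a + b) := fun j hj y hy =>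
    (gradedTail_le_iff (P := (gradedTail n (a + b)).comap (LieAlgebra.ad R L y))).2
      (fun k hk w hw => le_gradedTail (by omega) (hbracket j k y hy w hw)) hz
  exact (gradedTail_le_iff (P := (gradedTail n (a + b)).comap
    ((LieModule.toEnd R L L : L →ₗ[R] Module.End R L).flip z))).2 hpiece hy

theorem lie_right_mem_gradedTail (hx : ∀ i, ∀ y ∈ n i, ⁅y, x⁆ ∈ gradedTail n i) {i : ℕ}
    (hy : y ∈ gradedTail n i) : ⁅y, x⁆ ∈ gradedTail n i :=
  (gradedTail_le_iff (P := (gradedTail n i).comap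
    ((LieModule.toEnd R L L : L →ₗ[R] Module.End R L).flip x))).2
    (fun j hj w hw => gradedTail_antitone hj (hx j w hw)) hy

theorem ad_pow_mem_gradedTail (hbracket : ∀ i j, ∀ y ∈ n i, ∀ z ∈ n j, ⁅y, z⁆ ∈ n (i + j))
    (hy : y ∈ gradedTail n 1) {a : ℕ} {v : L} (hv : v ∈ gradedTail n a) (m : ℕ) :
    (LieAlgebra.ad R L y ^ m) v ∈ gradedTail n (a + m) := by
  induction m with
  | zero => simpa using hv
  | succ m ih =>
    rw [pow_succ', Module.End.mul_apply, show a + (m + 1) = 1 + (a + m) by omega]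
    exact lie_mem_gradedTail hbracket hy ih

theorem ad_pow_succ_mem_gradedTail
    (hbracket : ∀ i j, ∀ y ∈ n i, ∀ z ∈ n j, ⁅y, z⁆ ∈ n (i + j))
    (hx : ∀ i, ∀ y ∈ n i, ⁅y, x⁆ ∈ gradedTail n i) (hy : y ∈ gradedTail n 1) (k : ℕ) :
    (LieAlgebra.ad R L y ^ (k + 1)) x ∈ gradedTail n (k + 1) := by
  rw [pow_succ, Module.End.mul_apply, add_comm k]
  exact ad_pow_mem_gradedTail hbracket hy (lie_right_mem_gradedTail hx hy) k

theorem ad_pow_succ_sub_ad_pow_succ_mem_gradedTail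
    (hbracket : ∀ i j, ∀ y ∈ n i, ∀ z ∈ n j, ⁅y, z⁆ ∈ n (i + j))
    (hx : ∀ i, ∀ y ∈ n i, ⁅y, x⁆ ∈ gradedTail n i) (hy : y ∈ gradedTail n 1)
    (hy' : y' ∈ gradedTail n 1) {i : ℕ} (hd : y - y' ∈ gradedTail n i) (m : ℕ) :
    (LieAlgebra.ad R L y ^ (m + 1)) x - (LieAlgebra.ad R L y' ^ (m + 1)) x
      ∈ gradedTail n (i + m) := by
  induction m with
  | zero => simpa [← sub_lie] using lie_right_mem_gradedTail hx hd
  | succ m ih =>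
    set A := (LieAlgebra.ad R L y ^ (m + 1)) x
    set B := (LieAlgebra.ad R L y' ^ (m + 1)) x
    have hstep : (LieAlgebra.ad R L y ^ (m + 1 + 1)) x -
        (LieAlgebra.ad R L y' ^ (m + 1 + 1)) x = ⁅y, A - B⁆ + ⁅y - y', B⁆ := by
      rw [pow_succ' _ (m + 1), pow_succ' _ (m + 1), Module.End.mul_apply, Module.End.mul_apply,
        LieAlgebra.ad_apply, LieAlgebra.ad_apply, lie_sub, sub_lie]
      abel
    rw [hstep]
    refine add_mem (gradedTail_antitone (by omega) (lie_mem_gradedTail hbracket hy ih))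
      (lie_mem_gradedTail hbracket hd (ad_pow_succ_mem_gradedTail hbracket hx hy' m))

variable {p : ℕ → L →ₗ[R] L} {i : ℕ}

theorem exists_sub_lie_mem_gradedTail_succ (hproj_id : ∀ i, ∀ z ∈ n i, p i z = z)
    (hproj_zero : ∀ i j, i ≠ j → ∀ z ∈ n j, p i z = 0)
    (hx : ∀ i, ∀ y ∈ n i, ⁅y, x⁆ ∈ gradedTail n i)
    (hsurj : Set.SurjOn (fun y => p i ⁅y, x⁆) (n i : Set L) (n i : Set L)) {z : L}
    (hz : z ∈ gradedTail n i) :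
    ∃ u ∈ gradedTail n i, z - ⁅u, x⁆ ∈ gradedTail n (i + 1) := by
  obtain ⟨u, hu, hux⟩ := hsurj (proj_mem_of_mem_gradedTail hproj_id hproj_zero hz)
  have hu' : u ∈ gradedTail n i := le_gradedTail le_rfl hu
  have hv : z - ⁅u, x⁆ ∈ gradedTail n i := sub_mem hz (lie_right_mem_gradedTail hx hu')
  have hpv : p i (z - ⁅u, x⁆) = 0 := by rw [map_sub, ← hux, sub_self]
  exact ⟨u, hu', by simpa [hpv] using sub_proj_mem_gradedTail_succ hproj_id hproj_zero hv⟩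

theorem mem_gradedTail_succ_of_lie_mem (hproj_id : ∀ i, ∀ z ∈ n i, p i z = z)
    (hproj_zero : ∀ i j, i ≠ j → ∀ z ∈ n j, p i z = 0)
    (hx : ∀ i, ∀ y ∈ n i, ⁅y, x⁆ ∈ gradedTail n i)
    (hinj : Set.InjOn (fun y => p i ⁅y, x⁆) (n i : Set L)) {u : L} (hu : u ∈ gradedTail n i)
    (hux : ⁅u, x⁆ ∈ gradedTail n (i + 1)) : u ∈ gradedTail n (i + 1) := by
  have hrest := sub_proj_mem_gradedTail_succ hproj_id hproj_zero hu
  have hlead : ⁅p i u, x⁆ ∈ gradedTail n (i + 1) := by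
    simpa using sub_mem hux (lie_right_mem_gradedTail hx hrest)
  have hzero : p i u = 0 :=
    hinj (proj_mem_of_mem_gradedTail hproj_id hproj_zero hu) (zero_mem _)
      (by simpa using proj_eq_zero_of_mem_gradedTail_succ hproj_zero hlead)
  simpa [hzero] using hrest

end Lie

section TruncatedExponential

variable (K : Type*) {L : Type*} [Field K] [LieRing L] [LieAlgebra K L]

def truncExpAdSub (N : ℕ) (x y : L) : L :=
  ∑ k ∈ Finset.range (N + 1),
    (((k + 1).factorial : K))⁻¹ • ((LieAlgebra.ad K L y ^ (k + 1)) x)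

variable {K} {n : ℕ → Submodule K L} {N : ℕ} {x : L}

theorem truncExpAdSub_mapsTo (hbracket : ∀ i j, ∀ y ∈ n i, ∀ z ∈ n j, ⁅y, z⁆ ∈ n (i + j))
    (hx : ∀ i, ∀ y ∈ n i, ⁅y, x⁆ ∈ gradedTail n i) :
    Set.MapsTo (truncExpAdSub K N x) (gradedTail n 1) (gradedTail n 1) := fun y hy =>
  Submodule.sum_mem _ fun k _ => Submodule.smul_mem _ _ <|
    gradedTail_antitone (by omega) (ad_pow_succ_mem_gradedTail hbracket hx hy k)

theorem truncExpAdSub_sub_sub_lie_mem_gradedTail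
    (hbracket : ∀ i j, ∀ y ∈ n i, ∀ z ∈ n j, ⁅y, z⁆ ∈ n (i + j))
    (hx : ∀ i, ∀ y ∈ n i, ⁅y, x⁆ ∈ gradedTail n i) {i : ℕ} {y y' : L}
    (hy : y ∈ gradedTail n 1) (hy' : y' ∈ gradedTail n 1) (hd : y - y' ∈ gradedTail n i) :
    truncExpAdSub K N x y - truncExpAdSub K N x y' - ⁅y - y', x⁆ ∈ gradedTail n (i + 1) := by
  have hsplit : truncExpAdSub K N x y - truncExpAdSub K N x y' - ⁅y - y', x⁆ =
      ∑ k ∈ Finset.range N, (((k + 2).factorial : K))⁻¹ •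
        ((LieAlgebra.ad K L y ^ (k + 2)) x - (LieAlgebra.ad K L y' ^ (k + 2)) x) := by
    simp only [truncExpAdSub, ← Finset.sum_sub_distrib, ← smul_sub]
    rw [Finset.sum_range_succ']
    simp [sub_lie]
  rw [hsplit]
  exact Submodule.sum_mem _ fun k _ => Submodule.smul_mem _ _ <| gradedTail_antitone
    (by omega) (ad_pow_succ_sub_ad_pow_succ_mem_gradedTail hbracket hx hy hy' hd (k + 1))

end TruncatedExponential

theorem stmt17_general (𝔤 : Type*) [LieRing 𝔤] [LieAlgebra ℂ 𝔤]
    (Nn : ℕ) (n : ℕ → Submodule ℂ 𝔤) (p : ℕ → (𝔤 →ₗ[ℂ] 𝔤))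
    (hnN : ∀ i, Nn < i → n i = ⊥)
    (hbracket : ∀ i j, ∀ y ∈ n i, ∀ z ∈ n j, ⁅y, z⁆ ∈ n (i + j))
    (hproj_id : ∀ i, ∀ z ∈ n i, p i z = z)
    (hproj_zero : ∀ i j, i ≠ j → ∀ z ∈ n j, p i z = 0)
    (x : 𝔤)
    (hx : ∀ i, ∀ y ∈ n i, ⁅y, x⁆ ∈ ⨆ j ∈ Set.Ici i, n j)
    (hiso : ∀ i, 1 ≤ i → i ≤ Nn →
      Set.BijOn (fun y => p i ⁅y, x⁆) (n i : Set 𝔤) (n i : Set 𝔤)) :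
    Set.BijOn
      (fun y : 𝔤 => ∑ k ∈ Finset.range (Nn + 1),
        (((k + 1).factorial : ℂ))⁻¹ • (((LieAlgebra.ad ℂ 𝔤 y) ^ (k + 1)) x))
      ((⨆ i ∈ Finset.Icc 1 Nn, n i : Submodule ℂ 𝔤) : Set 𝔤)
      ((⨆ i ∈ Finset.Icc 1 Nn, n i : Submodule ℂ 𝔤) : Set 𝔤) := by
  change Set.BijOn (truncExpAdSub ℂ Nn x) _ _
  have hx' : ∀ i, ∀ y ∈ n i, ⁅y, x⁆ ∈ gradedTail n i := hx
  have hFN : gradedTail n (Nn + 1) = ⊥ := gradedTail_eq_bot hnN Nn.lt_succ_self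
  have happrox : ∀ i, ∀ y ∈ gradedTail n 1, ∀ y' ∈ gradedTail n 1, y - y' ∈ gradedTail n i →
      truncExpAdSub ℂ Nn x y - truncExpAdSub ℂ Nn x y' - ⁅y - y', x⁆ ∈ gradedTail n (i + 1) :=
    fun _ _ hy _ hy' hd => truncExpAdSub_sub_sub_lie_mem_gradedTail hbracket hx' hy hy' hd
  rw [iSup_Icc_eq_gradedTail_one hnN]
  have hmaps := truncExpAdSub_mapsTo (N := Nn) hbracket hx'
  refine ⟨hmaps, injOn_of_injective_on_graded (T := (⁅·, x⁆)) hFN happrox ?_,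
    surjOn_of_surjective_on_graded (T := (⁅·, x⁆)) gradedTail_antitone hFN hmaps happrox ?_⟩
  · exact fun i hi hiN u hu hux =>
      mem_gradedTail_succ_of_lie_mem hproj_id hproj_zero hx' (hiso i hi hiN).injOn hu hux
  · exact fun i hi hiN z hz =>
      exists_sub_lie_mem_gradedTail_succ hproj_id hproj_zero hx' (hiso i hi hiN).surjOn hz

/-- Let `𝔤` be a finite-dimensional complex Lie algebra, `𝔫 = ⊕_{i=1}^N 𝔫(i)`
a graded nilpotent subalgebra (`n 0 = ⊥`, `n i = ⊥` for `i > N`,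
`[𝔫(i),𝔫(j)] ⊆ 𝔫(i+j)`, with projections `p i` onto the graded pieces), and
`x ∈ 𝔤` with `[𝔫(i), x] ⊆ ⊕_{j ≥ i} 𝔫(j)` such that for each `1 ≤ i ≤ N` the
map `𝔫(i) → 𝔫(i)`, `y ↦ (component of [y,x] in 𝔫(i))`, is a linear
isomorphism. Then `φ : 𝔫 → 𝔫`, `φ(y) = e^{ad(y)}(x) − x`, is a bijection. -/
theorem stmt17 (𝔤 : Type*) [LieRing 𝔤] [LieAlgebra ℂ 𝔤] [Module.Finite ℂ 𝔤]
    (Nn : ℕ) (n : ℕ → Submodule ℂ 𝔤) (p : ℕ → (𝔤 →ₗ[ℂ] 𝔤))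
    (hn0 : n 0 = ⊥) (hnN : ∀ i, Nn < i → n i = ⊥)
    (hbracket : ∀ i j, ∀ y ∈ n i, ∀ z ∈ n j, ⁅y, z⁆ ∈ n (i + j))
    (hproj_id : ∀ i, ∀ z ∈ n i, p i z = z)
    (hproj_zero : ∀ i j, i ≠ j → ∀ z ∈ n j, p i z = 0)
    (x : 𝔤)
    (hx : ∀ i, ∀ y ∈ n i, ⁅y, x⁆ ∈ ⨆ j ∈ Set.Ici i, n j)
    (hiso : ∀ i, 1 ≤ i → i ≤ Nn →
      Set.BijOn (fun y => p i ⁅y, x⁆) (n i : Set 𝔤) (n i : Set 𝔤)) :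
    Set.BijOn
      (fun y : 𝔤 => ∑ k ∈ Finset.range (Nn + 1),
        (((k + 1).factorial : ℂ))⁻¹ • (((LieAlgebra.ad ℂ 𝔤 y) ^ (k + 1)) x))
      ((⨆ i ∈ Finset.Icc 1 Nn, n i : Submodule ℂ 𝔤) : Set 𝔤)
      ((⨆ i ∈ Finset.Icc 1 Nn, n i : Submodule ℂ 𝔤) : Set 𝔤) :=
  stmt17_general 𝔤 Nn n p hnN hbracket hproj_id hproj_zero x hx hiso
end
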